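/- Let X_1, ..., X_n be i.i.d. real random variables with finite moments, n ≥ 3. Then k_{(3)} = (n^2 S_3 - 3n S_1 S_2 + 2 S_1^3)/(n(n-1)(n-2)), with S_r = Σ_j X_j^r, satisfies E[k_{(3)}] = κ_3, the third cumulant of X_1, i.e. κ_3 = E[X_1^3] - 3E[X_1^2]E[X_1] + 2(E[X_1])^3. -/

import Mathlib

open MeasureTheory ProbabilityTheory

/-- For i.i.d. real random variables `X_1,…,X_n` (`n ≥ 3`) with finite moments,
the k-statistic `k₍₃₎ = (n²S₃ - 3n S₁S₂ + 2S₁³)/(n(n-1)(n-2))` with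
`S_r = ∑_j X_j^r` is an unbiased estimator of the third cumulant:
`E[k₍₃₎] = E[X₁³] - 3E[X₁²]E[X₁] + 2(E[X₁])³`. -/
theorem stmt13 {Ω : Type*} [MeasurableSpace Ω] {μ : Measure Ω}
    [IsProbabilityMeasure μ] (n : ℕ) [NeZero n] (hn : 3 ≤ n)
    (X : Fin n → Ω → ℝ)
    (hindep : iIndepFun X μ)
    (hmeas : ∀ k, Measurable (X k))
    (hident : ∀ k, Measure.map (X k) μ = Measure.map (X 0) μ)
    (hLp : ∀ (k : Fin n) (p : ℕ), MemLp (X k) p μ) :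
    ∫ ω, ((n : ℝ) ^ 2 * (∑ j, X j ω ^ 3) -
          3 * (n : ℝ) * (∑ j, X j ω) * (∑ j, X j ω ^ 2) +
          2 * (∑ j, X j ω) ^ 3) /
        ((n : ℝ) * ((n : ℝ) - 1) * ((n : ℝ) - 2)) ∂μ =
      (∫ ω, X 0 ω ^ 3 ∂μ) - 3 * (∫ ω, X 0 ω ^ 2 ∂μ) * (∫ ω, X 0 ω ∂μ) +
        2 * (∫ ω, X 0 ω ∂μ) ^ 3 := by
  classical
  set m1 : ℝ := ∫ ω, X 0 ω ∂μ with hm1def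
  set m2 : ℝ := ∫ ω, X 0 ω ^ 2 ∂μ with hm2def
  set m3 : ℝ := ∫ ω, X 0 ω ^ 3 ∂μ with hm3def
  -- all powers are integrable
  have hI : ∀ (k : Fin n) (r : ℕ), Integrable (fun ω => X k ω ^ r) μ := by
    intro k r
    rcases Nat.eq_zero_or_pos r with h0 | hr
    · simp [h0]
    · have h := (hLp k r).integrable_norm_rpow
        (by exact_mod_cast Nat.cast_ne_zero.mpr hr.ne') (by simp)
      simp only [ENNReal.toReal_natCast] at h
      refine h.mono ((hmeas k).pow_const r).aestronglyMeasurable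
        (ae_of_all _ fun ω => ?_)
      have h1 : ‖X k ω ^ r‖ = ‖X k ω‖ ^ (r : ℝ) := by
        rw [Real.rpow_natCast]
        simp [Real.norm_eq_abs, abs_pow]
      rw [h1]
      exact le_abs_self _
  have hI1 : ∀ k, Integrable (X k) μ := by
    intro k; simpa using hI k 1
  -- identical moments
  have hmom : ∀ (k : Fin n) (r : ℕ), ∫ ω, X k ω ^ r ∂μ = ∫ ω, X 0 ω ^ r ∂μ := by
    intro k r
    have h1 : ∫ x, x ^ r ∂(Measure.map (X k) μ) = ∫ ω, X k ω ^ r ∂μ :=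
      integral_map (hmeas k).aemeasurable
        ((measurable_id.pow_const r).aestronglyMeasurable)
    have h2 : ∫ x, x ^ r ∂(Measure.map (X 0) μ) = ∫ ω, X 0 ω ^ r ∂μ :=
      integral_map (hmeas 0).aemeasurable
        ((measurable_id.pow_const r).aestronglyMeasurable)
    rw [← h1, hident k, h2]
  have hmom1 : ∀ k, ∫ ω, X k ω ∂μ = m1 := by
    intro k; have := hmom k 1; simpa using this
  have hmom2 : ∀ k, ∫ ω, X k ω ^ 2 ∂μ = m2 := fun k => hmom k 2
  have hmom3 : ∀ k, ∫ ω, X k ω ^ 3 ∂μ = m3 := fun k => hmom k 3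
  -- moments of products, pairs
  have hpairInd : ∀ (i j : Fin n) (a b : ℕ), i ≠ j →
      IndepFun (fun ω => X i ω ^ a) (fun ω => X j ω ^ b) μ := by
    intro i j a b hij
    exact (hindep.indepFun hij).comp (measurable_id.pow_const a)
      (measurable_id.pow_const b)
  have hpair : ∀ (i j : Fin n) (a b : ℕ), i ≠ j →
      ∫ ω, X i ω ^ a * X j ω ^ b ∂μ =
        (∫ ω, X 0 ω ^ a ∂μ) * (∫ ω, X 0 ω ^ b ∂μ) := by
    intro i j a b hij
    rw [(hpairInd i j a b hij).integral_fun_mul_eq_mul_integral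
        ((hmeas i).pow_const a).aestronglyMeasurable
        ((hmeas j).pow_const b).aestronglyMeasurable,
      hmom i a, hmom j b]
  have hpairint : ∀ (i j : Fin n) (a b : ℕ), i ≠ j →
      Integrable (fun ω => X i ω ^ a * X j ω ^ b) μ := by
    intro i j a b hij
    exact (hpairInd i j a b hij).integrable_mul (hI i a) (hI j b)
  -- moments of triple products, all distinct
  have htrip : ∀ (i j k : Fin n), i ≠ j → i ≠ k → j ≠ k →
      ∫ ω, X i ω * (X j ω * X k ω) ∂μ = m1 * (m1 * m1) := by
    intro i j k hij hik hjk
    have hR : IndepFun (X i) (X j * X k) μ :=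
      hindep.indepFun_mul_right hmeas i j k hij hik
    have h1 : ∫ ω, X i ω * (X j ω * X k ω) ∂μ =
        (∫ ω, X i ω ∂μ) * ∫ ω, X j ω * X k ω ∂μ :=
      hR.integral_fun_mul_eq_mul_integral (hmeas i).aestronglyMeasurable
        ((hmeas j).mul (hmeas k)).aestronglyMeasurable
    have h2 : ∫ ω, X j ω * X k ω ∂μ = m1 * m1 := by
      have := hpair j k 1 1 hjk
      simpa using this
    rw [h1, h2, hmom1 i]
  have htripint : ∀ (i j k : Fin n), i ≠ j → i ≠ k → j ≠ k →
      Integrable (fun ω => X i ω * (X j ω * X k ω)) μ := by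
    intro i j k hij hik hjk
    exact (hindep.indepFun_mul_right hmeas i j k hij hik).integrable_mul (hI1 i)
      ((hindep.indepFun hjk).integrable_mul (hI1 j) (hI1 k))
  -- integrability of all double products
  have hDint1 : ∀ i j : Fin n, Integrable (fun ω => X i ω * X j ω ^ 2) μ := by
    intro i j
    by_cases hij : i = j
    · subst hij
      exact (hI i 3).congr (ae_of_all _ fun ω => by ring)
    · exact (hpairint i j 1 2 hij).congr (ae_of_all _ fun ω => by ring)
  -- integrability of all triple products
  have hTint1 : ∀ i j k : Fin n, Integrable (fun ω => X i ω * (X j ω * X k ω)) μ := by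
    intro i j k
    by_cases hij : i = j
    · subst hij
      by_cases hik : i = k
      · subst hik
        exact (hI i 3).congr (ae_of_all _ fun ω => by ring)
      · exact (hpairint i k 2 1 hik).congr (ae_of_all _ fun ω => by ring)
    · by_cases hik : i = k
      · subst hik
        exact (hpairint i j 2 1 hij).congr (ae_of_all _ fun ω => by ring)
      · by_cases hjk : j = k
        · subst hjk
          exact (hpairint i j 1 2 hij).congr (ae_of_all _ fun ω => by ring)
        · exact htripint i j k hij hik hjk
  -- values of triple products with coincidences
  have hA1 : ∀ i : Fin n, ∫ ω, X i ω * (X i ω * X i ω) ∂μ = m3 := by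
    intro i
    rw [show (fun ω => X i ω * (X i ω * X i ω)) = fun ω => X i ω ^ 3 from
      funext fun ω => by ring]
    exact hmom3 i
  have hA2 : ∀ i k : Fin n, i ≠ k → ∫ ω, X i ω * (X i ω * X k ω) ∂μ = m2 * m1 := by
    intro i k hik
    rw [show (fun ω => X i ω * (X i ω * X k ω)) = fun ω => X i ω ^ 2 * X k ω ^ 1 from
      funext fun ω => by ring]
    have := hpair i k 2 1 hik
    simpa using this
  have hA3 : ∀ i j : Fin n, i ≠ j → ∫ ω, X i ω * (X j ω * X i ω) ∂μ = m2 * m1 := by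
    intro i j hij
    rw [show (fun ω => X i ω * (X j ω * X i ω)) = fun ω => X i ω ^ 2 * X j ω ^ 1 from
      funext fun ω => by ring]
    have := hpair i j 2 1 hij
    simpa using this
  have hA4 : ∀ i j : Fin n, i ≠ j → ∫ ω, X i ω * (X j ω * X j ω) ∂μ = m1 * m2 := by
    intro i j hij
    rw [show (fun ω => X i ω * (X j ω * X j ω)) = fun ω => X i ω ^ 1 * X j ω ^ 2 from
      funext fun ω => by ring]
    have := hpair i j 1 2 hij
    simpa using this
  have hB1 : ∀ i : Fin n, ∫ ω, X i ω * X i ω ^ 2 ∂μ = m3 := by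
    intro i
    rw [show (fun ω => X i ω * X i ω ^ 2) = fun ω => X i ω ^ 3 from
      funext fun ω => by ring]
    exact hmom3 i
  have hB2 : ∀ i j : Fin n, i ≠ j → ∫ ω, X i ω * X j ω ^ 2 ∂μ = m1 * m2 := by
    intro i j hij
    rw [show (fun ω => X i ω * X j ω ^ 2) = fun ω => X i ω ^ 1 * X j ω ^ 2 from
      funext fun ω => by ring]
    have := hpair i j 1 2 hij
    simpa using this
  -- cardinalities
  have hcard1 : ∀ i : Fin n, ((Finset.univ.erase i).card : ℝ) = (n : ℝ) - 1 := by
    intro i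
    rw [Finset.card_erase_of_mem (Finset.mem_univ i)]
    simp only [Finset.card_univ, Fintype.card_fin]
    rw [Nat.cast_sub (by omega)]
    simp
  have hcard2 : ∀ i j : Fin n, j ≠ i →
      ((((Finset.univ.erase i)).erase j).card : ℝ) = (n : ℝ) - 2 := by
    intro i j hji
    rw [Finset.card_erase_of_mem (Finset.mem_erase.mpr ⟨hji, Finset.mem_univ j⟩),
      Finset.card_erase_of_mem (Finset.mem_univ i)]
    simp only [Finset.card_univ, Fintype.card_fin]
    rw [show n - 1 - 1 = n - 2 from by omega, Nat.cast_sub (by omega)]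
    simp
  -- the three expectations
  have hS3 : ∫ ω, (∑ j, X j ω ^ 3) ∂μ = (n : ℝ) * m3 := by
    rw [integral_finset_sum _ fun i _ => hI i 3]
    rw [Finset.sum_congr rfl fun i _ => hmom3 i, Finset.sum_const]
    simp [Finset.card_univ, mul_comm]
  have hD : ∫ ω, (∑ i, ∑ j, X i ω * X j ω ^ 2) ∂μ =
      (n : ℝ) * (m3 + ((n : ℝ) - 1) * (m1 * m2)) := by
    rw [integral_finset_sum _ fun i _ =>
      integrable_finset_sum _ fun j _ => hDint1 i j]
    rw [Finset.sum_congr rfl fun i _ =>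
      integral_finset_sum _ fun j _ => hDint1 i j]
    have hinner : ∀ i : Fin n,
        (∑ j, ∫ ω, X i ω * X j ω ^ 2 ∂μ) = m3 + ((n : ℝ) - 1) * (m1 * m2) := by
      intro i
      rw [← Finset.add_sum_erase _ _ (Finset.mem_univ i), hB1 i]
      congr 1
      rw [Finset.sum_congr rfl fun j hj =>
        hB2 i j (Finset.ne_of_mem_erase hj).symm, Finset.sum_const,
        nsmul_eq_mul, hcard1 i]
    rw [Finset.sum_congr rfl fun i _ => hinner i, Finset.sum_const, nsmul_eq_mul]
    simp [Finset.card_univ]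
  have hT : ∫ ω, (∑ i, ∑ j, ∑ k, X i ω * (X j ω * X k ω)) ∂μ =
      (n : ℝ) * ((m3 + ((n : ℝ) - 1) * (m2 * m1)) +
        ((n : ℝ) - 1) * ((m2 * m1 + (m1 * m2 + ((n : ℝ) - 2) * (m1 * (m1 * m1)))))) := by
    rw [integral_finset_sum _ fun i _ => integrable_finset_sum _ fun j _ =>
      integrable_finset_sum _ fun k _ => hTint1 i j k]
    rw [Finset.sum_congr rfl fun i _ => integral_finset_sum _ fun j _ =>
      integrable_finset_sum _ fun k _ => hTint1 i j k]
    rw [Finset.sum_congr rfl fun i _ => Finset.sum_congr rfl fun j _ =>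
      integral_finset_sum _ fun k _ => hTint1 i j k]
    have hinner : ∀ i : Fin n,
        (∑ j, ∑ k, ∫ ω, X i ω * (X j ω * X k ω) ∂μ) =
          (m3 + ((n : ℝ) - 1) * (m2 * m1)) +
            ((n : ℝ) - 1) * ((m2 * m1 + (m1 * m2 + ((n : ℝ) - 2) * (m1 * (m1 * m1))))) := by
      intro i
      rw [← Finset.add_sum_erase _ _ (Finset.mem_univ i)]
      congr 1
      · -- j = i case: ∑ k, ∫ X i (X i X k)
        rw [← Finset.add_sum_erase _ _ (Finset.mem_univ i), hA1 i]
        congr 1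
        rw [Finset.sum_congr rfl fun k hk =>
          hA2 i k (Finset.ne_of_mem_erase hk).symm, Finset.sum_const,
          nsmul_eq_mul, hcard1 i]
      · -- j ≠ i
        have hval : ∀ j ∈ Finset.univ.erase i,
            (∑ k, ∫ ω, X i ω * (X j ω * X k ω) ∂μ) =
              m2 * m1 + (m1 * m2 + ((n : ℝ) - 2) * (m1 * (m1 * m1))) := by
          intro j hj
          have hji : j ≠ i := Finset.ne_of_mem_erase hj
          rw [← Finset.add_sum_erase _ _ (Finset.mem_univ i), hA3 i j hji.symm]
          congr 1
          rw [← Finset.add_sum_erase _ _ (Finset.mem_erase.mpr ⟨hji, Finset.mem_univ j⟩),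
            hA4 i j hji.symm]
          congr 1
          have hdist : ∀ k ∈ (Finset.univ.erase i).erase j,
              ∫ ω, X i ω * (X j ω * X k ω) ∂μ = m1 * (m1 * m1) := by
            intro k hk
            have hkj : k ≠ j := (Finset.mem_erase.mp hk).1
            have hki : k ≠ i := Finset.ne_of_mem_erase (Finset.mem_erase.mp hk).2
            exact htrip i j k hji.symm hki.symm hkj.symm
          rw [Finset.sum_congr rfl hdist, Finset.sum_const, nsmul_eq_mul, hcard2 i j hji]
        rw [Finset.sum_congr rfl hval, Finset.sum_const, nsmul_eq_mul, hcard1 i]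
    rw [Finset.sum_congr rfl fun i _ => hinner i, Finset.sum_const, nsmul_eq_mul]
    simp [Finset.card_univ]
  -- rewrite the integrand using the expansions
  have hexp2 : ∀ ω, (∑ j, X j ω) * (∑ j, X j ω ^ 2) = ∑ i, ∑ j, X i ω * X j ω ^ 2 := by
    intro ω
    rw [Finset.sum_mul_sum]
  have hexp3 : ∀ ω, (∑ j, X j ω) ^ 3 = ∑ i, ∑ j, ∑ k, X i ω * (X j ω * X k ω) := by
    intro ω
    rw [show (∑ j, X j ω) ^ 3 =
        (∑ i, X i ω) * ((∑ j, X j ω) * (∑ k, X k ω)) from by ring]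
    rw [Finset.sum_mul_sum, Finset.sum_mul]
    refine Finset.sum_congr rfl fun i _ => ?_
    rw [Finset.mul_sum]
    refine Finset.sum_congr rfl fun j _ => ?_
    rw [Finset.mul_sum]
  -- main computation
  set C : ℝ := (n : ℝ) * ((n : ℝ) - 1) * ((n : ℝ) - 2) with hCdef
  have hrw : (fun ω => ((n : ℝ) ^ 2 * (∑ j, X j ω ^ 3) -
          3 * (n : ℝ) * (∑ j, X j ω) * (∑ j, X j ω ^ 2) +
          2 * (∑ j, X j ω) ^ 3) / C)
      = fun ω => ((n : ℝ) ^ 2 * (∑ j, X j ω ^ 3) -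
          3 * (n : ℝ) * (∑ i, ∑ j, X i ω * X j ω ^ 2) +
          2 * (∑ i, ∑ j, ∑ k, X i ω * (X j ω * X k ω))) / C := by
    funext ω
    rw [mul_assoc (3 * (n : ℝ)), hexp2 ω, hexp3 ω]
  rw [hrw]
  have hS3i : Integrable (fun ω => ∑ j, X j ω ^ 3) μ :=
    integrable_finset_sum _ fun i _ => hI i 3
  have hDi : Integrable (fun ω => ∑ i, ∑ j, X i ω * X j ω ^ 2) μ :=
    integrable_finset_sum _ fun i _ => integrable_finset_sum _ fun j _ => hDint1 i j
  have hTi : Integrable (fun ω => ∑ i, ∑ j, ∑ k, X i ω * (X j ω * X k ω)) μ :=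
    integrable_finset_sum _ fun i _ => integrable_finset_sum _ fun j _ =>
      integrable_finset_sum _ fun k _ => hTint1 i j k
  rw [integral_div]
  have hg1 : Integrable (fun ω => (n : ℝ) ^ 2 * (∑ j, X j ω ^ 3)) μ :=
    hS3i.const_mul _
  have hg2 : Integrable (fun ω => 3 * (n : ℝ) * ∑ i, ∑ j, X i ω * X j ω ^ 2) μ :=
    hDi.const_mul _
  have hg3 : Integrable (fun ω => 2 * ∑ i, ∑ j, ∑ k, X i ω * (X j ω * X k ω)) μ :=
    hTi.const_mul _
  have hg12 : Integrable (fun ω => (n : ℝ) ^ 2 * (∑ j, X j ω ^ 3) -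
      3 * (n : ℝ) * ∑ i, ∑ j, X i ω * X j ω ^ 2) μ := hg1.sub hg2
  rw [integral_add hg12 hg3, integral_sub hg1 hg2,
    integral_const_mul, integral_const_mul, integral_const_mul,
    hS3, hD, hT]
  have hn0 : (n : ℝ) ≠ 0 := by
    have : (3 : ℝ) ≤ (n : ℝ) := by exact_mod_cast hn
    linarith
  have hn1 : (n : ℝ) - 1 ≠ 0 := by
    have : (3 : ℝ) ≤ (n : ℝ) := by exact_mod_cast hn
    intro h; linarith
  have hn2 : (n : ℝ) - 2 ≠ 0 := by
    have : (3 : ℝ) ≤ (n : ℝ) := by exact_mod_cast hn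
    intro h; linarith
  rw [hCdef]
  field_simp
  ring
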